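/- arXiv:2403.06425 — 4 statements merged into one kernel-verified Lean document; each statement's English description precedes it below -/
import Mathlib

section
/- Let p : (Fin k → ℝ) → Fin c → ℝ be a parametric family of probability mass functions with p(θ)(x) > 0 near θ₀, each θ ↦ p(θ)(x) twice continuously differentiable near θ₀, and Σ_x p(θ)(x) = 1 near θ₀. Define KL(δ) = Σ_x p(θ₀)(x) · log(p(θ₀)(x) / p(θ₀ + δ)(x)). Then KL(δ) − (1/2)·Σ_x p(θ₀)(x) · (D(log p(·)(x))(θ₀)(δ))² = o(‖δ‖²) as δ → 0; that is, the KL divergence is locally a quadratic form given by the Fisher information up to second order. -/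
open Finset Asymptotics Filter Topology

/-! Since `∑ₓ p(θ₀ + δ)(x) = ∑ₓ p(θ₀)(x)`, the divergence equals `∑ₓ p(θ₀)(x) (r - 1 - log r)` with
`r = p(θ₀ + δ)(x) / p(θ₀)(x)`, a sum of terms `≈ p(θ₀)(x) (r - 1)² / 2`. As `r = 1` at `δ = 0` and
`Dr(θ₀) = D(log p(·)(x))(θ₀)`, first-order Taylor expansion of `r` gives the Fisher form. -/

lemma Real.isLittleO_sub_log_one_add_sub_sq :
    (fun t : ℝ => t - Real.log (1 + t) - t ^ 2 / 2) =o[𝓝 0] fun t => t ^ 2 := by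
  refine IsBigO.trans_isLittleO (g := fun t : ℝ => t ^ 3) ?_ (isLittleO_pow_pow (by norm_num))
  refine IsBigO.of_bound 2 ?_
  filter_upwards [eventually_abs_sub_lt (0 : ℝ) (by norm_num : (0 : ℝ) < 1 / 2)] with t ht
  rw [sub_zero] at ht
  have hlog := Real.abs_log_sub_add_sum_range_le (x := -t) (by rw [abs_neg]; linarith) 2
  rw [abs_neg] at hlog
  calc ‖t - Real.log (1 + t) - t ^ 2 / 2‖
      = |(∑ i ∈ range 2, (-t) ^ (i + 1) / (i + 1)) + Real.log (1 - -t)| := by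
        rw [Real.norm_eq_abs, ← abs_neg]
        congr 1
        simp only [sum_range_succ, sum_range_zero, sub_neg_eq_add]
        push_cast
        ring
    _ ≤ |t| ^ 3 / (1 - |t|) := hlog
    _ ≤ 2 * ‖t ^ 3‖ := by
      rw [div_le_iff₀ (by linarith), norm_pow, Real.norm_eq_abs]
      nlinarith [pow_nonneg (abs_nonneg t) 3]

section

variable {E : Type*} [NormedAddCommGroup E] [NormedSpace ℝ E] {g : E → ℝ} {L : E →L[ℝ] ℝ} {x : E}

lemma HasFDerivAt.isLittleO_sub_sq_sub_sq (hg : HasFDerivAt g L x) :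
    (fun δ => (g (x + δ) - g x) ^ 2 - L δ ^ 2) =o[𝓝 0] fun δ => ‖δ‖ ^ 2 := by
  have hlin : (fun δ => g (x + δ) - g x - L δ) =o[𝓝 0] fun δ => ‖δ‖ :=
    (hasFDerivAt_iff_isLittleO_nhds_zero.mp hg).norm_right
  have hL : (fun δ => L δ) =O[𝓝 0] fun δ => ‖δ‖ := (L.isBigO_id _).norm_right
  have hinc : (fun δ => g (x + δ) - g x) =O[𝓝 0] fun δ => ‖δ‖ :=
    (hlin.isBigO.add hL).congr_left fun δ => sub_add_cancel _ _
  refine ((hlin.mul_isBigO (hinc.add hL)).congr_left fun δ => by ring).congr_right fun δ => ?_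
  exact (sq _).symm

lemma HasFDerivAt.isLittleO_sub_one_sub_log_sub_sq (hg : HasFDerivAt g L x) (hx : g x = 1) :
    (fun δ => g (x + δ) - 1 - Real.log (g (x + δ)) - L δ ^ 2 / 2) =o[𝓝 0]
      fun δ => ‖δ‖ ^ 2 := by
  have hsq := hg.isLittleO_sub_sq_sub_sq
  rw [hx] at hsq
  have hL : (fun δ => L δ ^ 2) =O[𝓝 0] fun δ => ‖δ‖ ^ 2 := (L.isBigO_id _).norm_right.pow 2
  have hinc : (fun δ => (g (x + δ) - 1) ^ 2) =O[𝓝 0] fun δ => ‖δ‖ ^ 2 :=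
    (hsq.isBigO.add hL).congr_left fun δ => sub_add_cancel _ _
  have ht : Tendsto (fun δ => g (x + δ) - 1) (𝓝 0) (𝓝 0) := by
    have := hg.continuousAt.tendsto.comp ((continuous_const_add x).tendsto' 0 x (add_zero x))
    simpa [Function.comp_def, hx] using this.sub_const 1
  have htaylor := (Real.isLittleO_sub_log_one_add_sub_sq.comp_tendsto ht).trans_isBigO hinc
  refine (htaylor.add (hsq.const_mul_left (1 / 2))).congr_left fun δ => ?_
  simp only [Function.comp_apply, add_sub_cancel]
  ring

lemma HasFDerivAt.div_apply_self_fderiv_log {f : E → ℝ} {f' : E →L[ℝ] ℝ} (hf : HasFDerivAt f f' x)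
    (hx : f x ≠ 0) : HasFDerivAt (fun y => f y / f x) (fderiv ℝ (fun y => Real.log (f y)) x) x := by
  rw [(hf.log hx).fderiv]
  simpa [div_eq_inv_mul] using hf.const_mul (f x)⁻¹

end

lemma Finset.sum_mul_log_div_eq_sum_mul_sub_one_sub_log {ι : Type*} (s : Finset ι) {p q : ι → ℝ}
    (hp : ∀ i ∈ s, p i ≠ 0) (hpq : ∑ i ∈ s, p i = ∑ i ∈ s, q i) :
    ∑ i ∈ s, p i * Real.log (p i / q i) = ∑ i ∈ s, p i * (q i / p i - 1 - Real.log (q i / p i)) := by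
  calc ∑ i ∈ s, p i * Real.log (p i / q i)
      = ∑ i ∈ s, (q i - p i) + ∑ i ∈ s, p i * Real.log (p i / q i) := by
        rw [sum_sub_distrib, hpq, sub_self, zero_add]
    _ = _ := by
        rw [← sum_add_distrib]
        refine sum_congr rfl fun i hi => ?_
        rw [← inv_div, Real.log_inv]
        field_simp [hp i hi]
        ring

theorem stmt6_general (k c : ℕ)
    (p : (Fin k → ℝ) → Fin c → ℝ) (θ₀ : Fin k → ℝ)
    (hpos : ∀ᶠ θ in nhds θ₀, ∀ x : Fin c, 0 < p θ x)
    (hdiff : ∀ x : Fin c, ContDiffAt ℝ 2 (fun θ => p θ x) θ₀)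
    (hsum : ∀ᶠ θ in nhds θ₀, ∑ x, p θ x = 1) :
    (fun δ : Fin k → ℝ =>
        (∑ x : Fin c, p θ₀ x * Real.log (p θ₀ x / p (θ₀ + δ) x))
          - (1 / 2) * ∑ x : Fin c,
              p θ₀ x * (fderiv ℝ (fun θ => Real.log (p θ x)) θ₀ δ) ^ 2)
      =o[nhds 0] fun δ => ‖δ‖ ^ 2 := by
  have hp₀ : ∀ x, 0 < p θ₀ x := hpos.self_of_nhds
  have hterm : ∀ x, (fun δ => p θ₀ x * (p (θ₀ + δ) x / p θ₀ x - 1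
      - Real.log (p (θ₀ + δ) x / p θ₀ x) - fderiv ℝ (fun θ => Real.log (p θ x)) θ₀ δ ^ 2 / 2))
      =o[𝓝 0] fun δ => ‖δ‖ ^ 2 := fun x =>
    ((((hdiff x).differentiableAt two_ne_zero).hasFDerivAt.div_apply_self_fderiv_log
      (hp₀ x).ne').isLittleO_sub_one_sub_log_sub_sq (div_self (hp₀ x).ne')).const_mul_left _
  have hsumδ : ∀ᶠ δ in 𝓝 0, ∑ x, p (θ₀ + δ) x = 1 :=
    ((continuous_const_add θ₀).tendsto' 0 θ₀ (add_zero θ₀)).eventually hsum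
  refine (IsLittleO.fun_sum (s := univ) fun x _ => hterm x).congr' ?_ EventuallyEq.rfl
  filter_upwards [hsumδ] with δ hδ
  rw [sum_mul_log_div_eq_sum_mul_sub_one_sub_log univ (fun x _ => (hp₀ x).ne')
    (by rw [hδ, hsum.self_of_nhds]), mul_sum, ← sum_sub_distrib]
  refine sum_congr rfl fun x _ => ?_
  ring

theorem stmt6 (k c : ℕ) (hk : 0 < k) (hc : 0 < c)
    (p : (Fin k → ℝ) → Fin c → ℝ) (θ₀ : Fin k → ℝ)
    (hpos : ∀ᶠ θ in nhds θ₀, ∀ x : Fin c, 0 < p θ x)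
    (hdiff : ∀ x : Fin c, ContDiffAt ℝ 2 (fun θ => p θ x) θ₀)
    (hsum : ∀ᶠ θ in nhds θ₀, ∑ x, p θ x = 1) :
    (fun δ : Fin k → ℝ =>
        (∑ x : Fin c, p θ₀ x * Real.log (p θ₀ x / p (θ₀ + δ) x))
          - (1 / 2) * ∑ x : Fin c,
              p θ₀ x * (fderiv ℝ (fun θ => Real.log (p θ x)) θ₀ δ) ^ 2)
      =o[nhds 0] fun δ => ‖δ‖ ^ 2 :=
  stmt6_general k c p θ₀ hpos hdiff hsum
end

section
/- Let c be a positive natural number and define logsumexp(z) = log(Σ_j exp(z(j))) for z : Fin c → ℝ. Then logsumexp is twice differentiable everywhere, and its second derivative at z in directions u, v ∈ ℝ^c equals Σ_j p(j)·u(j)·v(j) − (Σ_j p(j)·u(j))·(Σ_j p(j)·v(j)), where p = softmax(z). -/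
open Finset

/-- Softmax of a logit vector. -/
noncomputable def softmax {c : ℕ} (z : Fin c → ℝ) : Fin c → ℝ :=
  fun j => Real.exp (z j) / ∑ k, Real.exp (z k)

/-- log-sum-exp of a logit vector. -/
noncomputable def logsumexp {c : ℕ} (z : Fin c → ℝ) : ℝ :=
  Real.log (∑ j, Real.exp (z j))

/-!
The gradient of `logsumexp` at `z` is the expectation functional `u ↦ ∑ j, p j * u j` of
`p = softmax z`, and since `softmax z j = exp (z j - logsumexp z)`, the chain rule gives
`∂ᵤ (softmax z j) = p j * (u j - ∑ k, p k * u k)`. Differentiating the gradient once more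
therefore yields the covariance of `u` and `v` under `p`.
-/

open ContinuousLinearMap

namespace Softmax

variable {c : ℕ}

noncomputable def expectation (z : Fin c → ℝ) : (Fin c → ℝ) →L[ℝ] ℝ :=
  ∑ j, softmax z j • proj j

@[simp]
lemma expectation_apply (z u : Fin c → ℝ) : expectation z u = ∑ j, softmax z j * u j := by
  simp [expectation]

variable [NeZero c]

lemma sum_exp_pos (z : Fin c → ℝ) : 0 < ∑ k, Real.exp (z k) :=
  sum_pos (fun k _ => Real.exp_pos (z k)) univ_nonempty

lemma exp_sub_logsumexp (z : Fin c → ℝ) (j : Fin c) :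
    Real.exp (z j - logsumexp z) = softmax z j := by
  rw [Real.exp_sub, logsumexp, Real.exp_log (sum_exp_pos z), softmax]

lemma contDiff_logsumexp {n : WithTop ℕ∞} : ContDiff ℝ n (logsumexp (c := c)) :=
  (ContDiff.sum fun k _ => Real.contDiff_exp.comp (contDiff_apply ℝ ℝ k)).log
    fun z => (sum_exp_pos z).ne'

lemma hasFDerivAt_logsumexp (z : Fin c → ℝ) :
    HasFDerivAt logsumexp (expectation z) z := by
  have hsum : HasFDerivAt (fun y : Fin c → ℝ => ∑ k, Real.exp (y k))
      (∑ j, Real.exp (z j) • proj j) z :=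
    HasFDerivAt.fun_sum fun j _ => (proj j : (Fin c → ℝ) →L[ℝ] ℝ).hasFDerivAt.exp
  have hgrad : expectation z = (∑ k, Real.exp (z k))⁻¹ • ∑ j, Real.exp (z j) • proj j := by
    simp only [expectation, smul_sum, smul_smul, softmax, div_eq_inv_mul]
  rw [hgrad]
  exact hsum.log (sum_exp_pos z).ne'

lemma fderiv_logsumexp : fderiv ℝ (logsumexp (c := c)) = expectation :=
  funext fun z => (hasFDerivAt_logsumexp z).fderiv

lemma hasFDerivAt_softmax (z : Fin c → ℝ) (j : Fin c) :
    HasFDerivAt (fun y => softmax y j) (softmax z j • (proj j - expectation z)) z := by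
  have h := ((proj j).hasFDerivAt.sub (hasFDerivAt_logsumexp z)).exp
  simp only [Pi.sub_apply, proj_apply, exp_sub_logsumexp] at h
  exact h

lemma hasFDerivAt_expectation (z : Fin c → ℝ) :
    HasFDerivAt expectation
      (∑ j, (softmax z j • (proj j - expectation z)).smulRight (proj j)) z :=
  HasFDerivAt.fun_sum fun j _ =>
    (hasFDerivAt_softmax z j).smul_const (proj j : (Fin c → ℝ) →L[ℝ] ℝ)

end Softmax

open Softmax in
theorem stmt7 (c : ℕ) (hc : 0 < c) :
    ContDiff ℝ 2 (logsumexp (c := c)) ∧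
    ∀ (z u v : Fin c → ℝ),
      fderiv ℝ (fderiv ℝ (logsumexp (c := c))) z u v
        = ∑ j, softmax z j * u j * v j
          - (∑ j, softmax z j * u j) * (∑ j, softmax z j * v j) := by
  have : NeZero c := ⟨hc.ne'⟩
  refine ⟨contDiff_logsumexp, fun z u v => ?_⟩
  rw [fderiv_logsumexp, (hasFDerivAt_expectation z).fderiv]
  simp only [_root_.sum_apply, smulRight_apply, smul_apply, sub_apply, proj_apply,
    expectation_apply, smul_eq_mul, mul_sub, sub_mul, sum_sub_distrib]
  rw [mul_sum]
  congr 1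
  exact sum_congr rfl fun j _ => by ring
end

section
/- Let c, m be positive natural numbers, z* : Fin c → ℝ, C0, C1, ΔC : Fin m → Fin c → ℝ, and set z1(j) = z*(j) + Σ_p C1(p, j), P1 = softmax(z1). For x ∈ ℝ^m define z(x)(j) = z*(j) + Σ_p (C0(p, j) + ΔC(p, j)·x(p)) and P(x) = softmax(z(x)), and let f(x) = Σ_j P1(j)·Σ_p (C1(p, j) − C0(p, j) − ΔC(p, j)·x(p)) + log(Σ_j exp(z(x)(j))). Then for every x ∈ ℝ^m, f(x) = D_KL(P1 ‖ P(x)) + log(Σ_j exp(z1(j))); consequently f(x) ≥ log(Σ_j exp(z1(j))), with equality if and only if P(x) = P1. -/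
open Finset

/-- Kullback–Leibler divergence between two probability vectors on `Fin c`. -/
noncomputable def KL {c : ℕ} (p q : Fin c → ℝ) : ℝ :=
  ∑ j, p j * Real.log (p j / q j)

/-! Writing `S(z) = ∑ⱼ exp zⱼ`, one has `log (softmax z j) = zⱼ - log S(z)`, so the linear part of `f`
is `∑ⱼ P1ⱼ (z1ⱼ - z(x)ⱼ)`, which is exactly `KL(P1 ‖ P(x)) + log S(z(x)) - log S(z1)`. The bound and
its equality case are Gibbs' inequality: for vectors with equal total mass, `KL(p ‖ q)` is the
`q`-weighted sum of the nonnegative function `t ↦ t log t + 1 - t` at `pⱼ / qⱼ`, which vanishes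
only at `t = 1`. -/

open InformationTheory

section Softmax

variable {c : ℕ}

lemma sum_exp_pos (hc : 0 < c) (z : Fin c → ℝ) : 0 < ∑ k, Real.exp (z k) :=
  sum_pos (fun _ _ => Real.exp_pos _) (univ_nonempty_iff.2 (Fin.pos_iff_nonempty.1 hc))

lemma softmax_pos (hc : 0 < c) (z : Fin c → ℝ) (j : Fin c) : 0 < softmax z j :=
  div_pos (Real.exp_pos _) (sum_exp_pos hc z)

lemma sum_softmax (hc : 0 < c) (z : Fin c → ℝ) : ∑ j, softmax z j = 1 := by
  simp only [softmax]
  rw [← sum_div, div_self (sum_exp_pos hc z).ne']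

lemma log_softmax (hc : 0 < c) (z : Fin c → ℝ) (j : Fin c) :
    Real.log (softmax z j) = z j - Real.log (∑ k, Real.exp (z k)) := by
  simp only [softmax]
  rw [Real.log_div (Real.exp_ne_zero _) (sum_exp_pos hc z).ne', Real.log_exp]

lemma KL_softmax_softmax (hc : 0 < c) (a b : Fin c → ℝ) :
    KL (softmax a) (softmax b) = ∑ j, softmax a j * (a j - b j)
      + Real.log (∑ k, Real.exp (b k)) - Real.log (∑ k, Real.exp (a k)) := by
  have hlog (j : Fin c) : Real.log (softmax a j / softmax b j) = (a j - b j)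
      + (Real.log (∑ k, Real.exp (b k)) - Real.log (∑ k, Real.exp (a k))) := by
    rw [Real.log_div (softmax_pos hc a j).ne' (softmax_pos hc b j).ne', log_softmax hc,
      log_softmax hc]
    ring
  simp only [KL, hlog, mul_add, sum_add_distrib, ← sum_mul, sum_softmax hc, one_mul]
  ring

end Softmax

section Gibbs

variable {c : ℕ} {p q : Fin c → ℝ}

lemma KL_eq_sum_mul_klFun (hq : ∀ j, 0 < q j) (hpq : ∑ j, p j = ∑ j, q j) :
    KL p q = ∑ j, q j * klFun (p j / q j) := by
  have hterm (j : Fin c) : q j * klFun (p j / q j) = p j * Real.log (p j / q j) + (q j - p j) := by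
    rw [klFun_apply]
    field_simp [(hq j).ne']
    ring
  rw [KL, sum_congr rfl fun j _ => hterm j, sum_add_distrib, sum_sub_distrib, hpq, sub_self,
    add_zero]

lemma KL_nonneg (hp : ∀ j, 0 ≤ p j) (hq : ∀ j, 0 < q j) (hpq : ∑ j, p j = ∑ j, q j) :
    0 ≤ KL p q := by
  rw [KL_eq_sum_mul_klFun hq hpq]
  exact sum_nonneg fun j _ => mul_nonneg (hq j).le (klFun_nonneg (div_nonneg (hp j) (hq j).le))

lemma KL_eq_zero_iff (hp : ∀ j, 0 ≤ p j) (hq : ∀ j, 0 < q j) (hpq : ∑ j, p j = ∑ j, q j) :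
    KL p q = 0 ↔ p = q := by
  have hnonneg (j : Fin c) : 0 ≤ q j * klFun (p j / q j) :=
    mul_nonneg (hq j).le (klFun_nonneg (div_nonneg (hp j) (hq j).le))
  have hzero (j : Fin c) : q j * klFun (p j / q j) = 0 ↔ p j = q j := by
    rw [mul_eq_zero, or_iff_right (hq j).ne', klFun_eq_zero_iff (div_nonneg (hp j) (hq j).le),
      div_eq_one_iff_eq (hq j).ne']
  rw [KL_eq_sum_mul_klFun hq hpq, sum_eq_zero_iff_of_nonneg fun j _ => hnonneg j, funext_iff]
  simp only [mem_univ, true_implies, hzero]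

end Gibbs

theorem stmt13_general (c m : ℕ) (hc : 0 < c)
    (zstar : Fin c → ℝ) (C0 C1 dC : Fin m → Fin c → ℝ)
    (z1 : Fin c → ℝ) (hz1 : z1 = fun j => zstar j + ∑ p, C1 p j)
    (P1 : Fin c → ℝ) (hP1 : P1 = softmax z1)
    (zx : (Fin m → ℝ) → Fin c → ℝ)
    (hzx : zx = fun x j => zstar j + ∑ p, (C0 p j + dC p j * x p))
    (f : (Fin m → ℝ) → ℝ)
    (hf : f = fun x =>
      ∑ j, P1 j * (∑ p, (C1 p j - C0 p j - dC p j * x p))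
        + Real.log (∑ j, Real.exp (zx x j))) :
    ∀ x : Fin m → ℝ,
      f x = KL P1 (softmax (zx x)) + Real.log (∑ j, Real.exp (z1 j)) ∧
      Real.log (∑ j, Real.exp (z1 j)) ≤ f x ∧
      (f x = Real.log (∑ j, Real.exp (z1 j)) ↔ softmax (zx x) = P1) := by
  intro x
  have hlogit_diff (j : Fin c) : ∑ p, (C1 p j - C0 p j - dC p j * x p) = z1 j - zx x j := by
    simp only [hz1, hzx, sum_sub_distrib, sum_add_distrib]
    ring
  have hfx : f x = KL P1 (softmax (zx x)) + Real.log (∑ j, Real.exp (z1 j)) := by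
    rw [hf, hP1, KL_softmax_softmax hc]
    simp only [hlogit_diff]
    ring
  have hmass : ∑ j, P1 j = ∑ j, softmax (zx x) j := by rw [hP1, sum_softmax hc, sum_softmax hc]
  have hP1_nonneg (j : Fin c) : 0 ≤ P1 j := hP1 ▸ (softmax_pos hc z1 j).le
  have hKL_nonneg := KL_nonneg hP1_nonneg (softmax_pos hc (zx x)) hmass
  refine ⟨hfx, by linarith, ?_⟩
  rw [hfx, add_eq_right, KL_eq_zero_iff hP1_nonneg (softmax_pos hc (zx x)) hmass, eq_comm]

theorem stmt13 (c m : ℕ) (hc : 0 < c) (hm : 0 < m)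
    (zstar : Fin c → ℝ) (C0 C1 dC : Fin m → Fin c → ℝ)
    (z1 : Fin c → ℝ) (hz1 : z1 = fun j => zstar j + ∑ p, C1 p j)
    (P1 : Fin c → ℝ) (hP1 : P1 = softmax z1)
    (zx : (Fin m → ℝ) → Fin c → ℝ)
    (hzx : zx = fun x j => zstar j + ∑ p, (C0 p j + dC p j * x p))
    (f : (Fin m → ℝ) → ℝ)
    (hf : f = fun x =>
      ∑ j, P1 j * (∑ p, (C1 p j - C0 p j - dC p j * x p))
        + Real.log (∑ j, Real.exp (zx x j))) :
    ∀ x : Fin m → ℝ,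
      f x = KL P1 (softmax (zx x)) + Real.log (∑ j, Real.exp (z1 j)) ∧
      Real.log (∑ j, Real.exp (z1 j)) ≤ f x ∧
      (f x = Real.log (∑ j, Real.exp (z1 j)) ↔ softmax (zx x) = P1) :=
  stmt13_general c m hc zstar C0 C1 dC z1 hz1 P1 hP1 zx hzx f hf
end

section
/- (GNN-LRP is a special case of the DeepLIFT path attribution when the reference is the empty graph.) Let T ≥ 1 and let I₀, …, I_T be finite index sets of neurons per layer. Let h_t : I_t → ℝ (activations) for t = 0, …, T, z_t : I_t → ℝ (pre-activations) for t = 1, …, T, and θ_t : I_{t−1} → I_t → ℝ (weights) for t = 1, …, T. Fix a path u_0 ∈ I₀, u_1 ∈ I₁, …, u_T ∈ I_T and assume z_t(u_t) ≠ 0 for all t = 1, …, T. Define the GNN-LRP relevance of the path as R = (∏_{t=1}^{T} h_{t−1}(u_{t−1})·θ_t(u_{t−1}, u_t) / z_t(u_t)) · z_T(u_T), and the DeepLIFT contribution with zero reference activations as C = h_0(u_0) · (∏_{t=1}^{T−1} (h_t(u_t)/z_t(u_t))·θ_t(u_{t−1}, u_t)) · θ_T(u_{T−1}, u_T). Then R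 = C. -/
open Finset

/-! Writing each LRP factor as `h_t · (θ_t / z_{t+1})` and shifting the index of the activations
by one regroups the LRP product into `h_0`, the DeepLIFT multipliers `(h_{t+1} / z_{t+1}) · θ_t`
and a last factor `θ_T / z_T`, whose denominator the output logit `z_T` cancels. -/

theorem Finset.prod_range_succ_mul_shift {M : Type*} [CommMonoid M] (a b : ℕ → M) (n : ℕ) :
    ∏ t ∈ range (n + 1), a t * b t = a 0 * (∏ t ∈ range n, a (t + 1) * b t) * b n := by
  rw [prod_mul_distrib, prod_mul_distrib, prod_range_succ' a, prod_range_succ b]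
  ac_rfl

theorem stmt14_general (Tp : ℕ) (I : ℕ → Type)
    (h z : (t : ℕ) → I t → ℝ)
    (θ : (t : ℕ) → I t → I (t + 1) → ℝ)
    (u : (t : ℕ) → I t)
    (hz : ∀ t ∈ Finset.range (Tp + 1), z (t + 1) (u (t + 1)) ≠ 0) :
    (∏ t ∈ Finset.range (Tp + 1),
        h t (u t) * θ t (u t) (u (t + 1)) / z (t + 1) (u (t + 1)))
        * z (Tp + 1) (u (Tp + 1))
      = h 0 (u 0)
        * (∏ t ∈ Finset.range Tp,
            (h (t + 1) (u (t + 1)) / z (t + 1) (u (t + 1))) * θ t (u t) (u (t + 1)))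
        * θ Tp (u Tp) (u (Tp + 1)) := by
  have hzT : z (Tp + 1) (u (Tp + 1)) ≠ 0 := hz Tp (self_mem_range_succ Tp)
  simp_rw [mul_div_assoc, prod_range_succ_mul_shift, mul_assoc _ (θ Tp _ _ / _),
    div_mul_cancel₀ _ hzT, mul_div_assoc', div_mul_eq_mul_div]

/-- GNN-LRP path relevance equals the DeepLIFT path contribution with zero
reference activations.  We write the number of layers `T ≥ 1` as `T = Tp + 1`. -/
theorem stmt14 (Tp : ℕ) (I : ℕ → Type) [∀ t, Fintype (I t)]
    (h z : (t : ℕ) → I t → ℝ)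
    (θ : (t : ℕ) → I t → I (t + 1) → ℝ)
    (u : (t : ℕ) → I t)
    (hz : ∀ t ∈ Finset.range (Tp + 1), z (t + 1) (u (t + 1)) ≠ 0) :
    (∏ t ∈ Finset.range (Tp + 1),
        h t (u t) * θ t (u t) (u (t + 1)) / z (t + 1) (u (t + 1)))
        * z (Tp + 1) (u (Tp + 1))
      = h 0 (u 0)
        * (∏ t ∈ Finset.range Tp,
            (h (t + 1) (u (t + 1)) / z (t + 1) (u (t + 1))) * θ t (u t) (u (t + 1)))
        * θ Tp (u Tp) (u (Tp + 1)) :=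
  stmt14_general Tp I h z θ u hz
end
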